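/- arXiv:2307.16484 — 3 statements merged into one kernel-verified Lean document; each statement's English description precedes it below -/
import Mathlib

section
/- Let K be a convex body in ℝⁿ with C² boundary and strictly positive curvature, containing the origin in its interior. For x ∈ ∂K, let π_{∂K}(x) : T_x ℝⁿ → T_x ∂K denote the projection onto T_x ∂K parallel to the radial direction x. Then for all x ∈ ∂K, D²(‖x‖²_K/2) = π_{∂K}(x)ᵀ (II_{∂K}(x)/⟨x, ν_K(x)⟩) π_{∂K}(x) + (Id − π_{∂K}(x))ᵀ (1/|x|²) (Id − π_{∂K}(x)), where II_{∂K}(x) is the second fundamental form of ∂K at x and ν_K(x) the outer unit normal. -/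
open scoped RealInnerProductSpace ENNReal NNReal Pointwise
open MeasureTheory Metric Set

noncomputable section

/-- `Euc n` is Euclidean space `ℝⁿ`. -/
abbrev Euc (n : ℕ) := EuclideanSpace ℝ (Fin n)

/-- A convex body in `ℝⁿ` (with the origin as an interior point). -/
def IsConvexBody (n : ℕ) (K : Set (Euc n)) : Prop :=
  IsCompact K ∧ Convex ℝ K ∧ (0 : Euc n) ∈ interior K

/-- An origin-symmetric set. -/
def IsOriginSymmetric {n : ℕ} (K : Set (Euc n)) : Prop := ∀ x ∈ K, -x ∈ K

/-- The support function `h_K (x) = max_{y ∈ K} ⟨x, y⟩`. -/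
def suppFn {n : ℕ} (K : Set (Euc n)) (x : Euc n) : ℝ :=
  sSup ((fun y => ⟪x, y⟫) '' K)

/-- Half of the squared Minkowski gauge, `‖x‖_K² / 2`. -/
def halfGaugeSq {n : ℕ} (K : Set (Euc n)) (x : Euc n) : ℝ := gauge K x ^ 2 / 2

/-- The Euclidean Hessian `D²f(x)(u,v)`. -/
def hess {n : ℕ} (f : Euc n → ℝ) (x u v : Euc n) : ℝ :=
  fderiv ℝ (fun y => fderiv ℝ f y v) x u

/-- The Gauss map (outer unit normal) of `∂K`, extended `0`-homogeneously to `ℝⁿ \ {0}`: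
for a smooth convex body containing the origin in its interior, the outer unit normal at
`x ∈ ∂K` is the normalized gradient of the Minkowski gauge. -/
def gaussMap {n : ℕ} (K : Set (Euc n)) (x : Euc n) : Euc n :=
  ‖gradient (gauge K) x‖⁻¹ • gradient (gauge K) x

/-- The second fundamental form `II_{∂K}(x)(u,v)` of `∂K` (for tangent vectors `u, v`),
via the Weingarten map, i.e. the differential of the Gauss map. -/
def secondFF {n : ℕ} (K : Set (Euc n)) (x u v : Euc n) : ℝ :=
  ⟪fderiv ℝ (gaussMap K) x u, v⟫

/-- `K ∈ 𝒦²₊`: a convex body with `C²`-smooth boundary (equivalently, `‖·‖_K²` is `C²` away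
from the origin) and strictly positive curvature (positive-definite second fundamental form). -/
def IsC2PlusBody (n : ℕ) (K : Set (Euc n)) : Prop :=
  IsConvexBody n K ∧ ContDiffOn ℝ 2 (halfGaugeSq K) {(0 : Euc n)}ᶜ ∧
  ∀ x ∈ frontier K, ∀ u : Euc n, ⟪gaussMap K x, u⟫ = 0 → u ≠ 0 → 0 < secondFF K x u u

/-- `K ∈ 𝒦^{2,r}₊`: as `IsC2PlusBody`, with second derivatives of `‖·‖_K²/2` moreover
`r`-Hölder continuous on the unit sphere. -/
def IsC2HolderBody (n : ℕ) (r : ℝ) (K : Set (Euc n)) : Prop :=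
  IsC2PlusBody n K ∧ ∃ C : ℝ, ∀ x ∈ sphere (0 : Euc n) 1, ∀ y ∈ sphere (0 : Euc n) 1,
    ‖fderiv ℝ (fun z => fderiv ℝ (halfGaugeSq K) z) x
      - fderiv ℝ (fun z => fderiv ℝ (halfGaugeSq K) z) y‖ ≤ C * ‖x - y‖ ^ r

/-- `K ∈ 𝒦^{2,α}₊` for some Hölder exponent `α ∈ (0,1]`. -/
def IsC2AlphaBody (n : ℕ) (K : Set (Euc n)) : Prop :=
  ∃ r : ℝ, 0 < r ∧ r ≤ 1 ∧ IsC2HolderBody n r K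

/-- `K ∈ 𝒦^∞₊`: a `C^∞`-smooth convex body with strictly positive curvature. -/
def IsSmoothBody (n : ℕ) (K : Set (Euc n)) : Prop :=
  IsConvexBody n K ∧ ContDiffOn ℝ (⊤ : ℕ∞) (halfGaugeSq K) {(0 : Euc n)}ᶜ ∧
  ∀ x ∈ frontier K, ∀ u : Euc n, ⟪gaussMap K x, u⟫ = 0 → u ≠ 0 → 0 < secondFF K x u u

/-- The surface-area measure `S_K` of `K`, as a measure on `ℝⁿ` concentrated on `S^{n-1}`:
the push-forward of the `(n-1)`-dimensional Hausdorff measure on `∂K` via the Gauss map. -/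
def surfaceMeasure (n : ℕ) (K : Set (Euc n)) : Measure (Euc n) :=
  Measure.map (gaussMap K) ((μH[(n : ℝ) - 1] : Measure (Euc n)).restrict (frontier K))

/-- The `L^p` surface-area measure `S_p K = h_K^{1-p} S_K`. -/
def lpSurfaceMeasure (n : ℕ) (p : ℝ) (K : Set (Euc n)) : Measure (Euc n) :=
  (surfaceMeasure n K).withDensity fun θ => ENNReal.ofReal (suppFn K θ ^ (1 - p))

/-- The cone-volume measure `V_K = (1/n) h_K S_K`. -/
def coneVolumeMeasure (n : ℕ) (K : Set (Euc n)) : Measure (Euc n) :=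
  (n : ℝ≥0∞)⁻¹ • (surfaceMeasure n K).withDensity fun θ => ENNReal.ofReal (suppFn K θ)

/-- The polar body `K* = {x : ⟨x,y⟩ ≤ 1 ∀ y ∈ K}`. -/
def polarBody {n : ℕ} (K : Set (Euc n)) : Set (Euc n) := {x | ∀ y ∈ K, ⟪x, y⟫ ≤ 1}

/-- The `0`-homogeneous extension to `ℝⁿ \ {0}` of a function on the unit sphere. -/
def zeroHomExt {n : ℕ} (f : Euc n → ℝ) (x : Euc n) : ℝ := f (‖x‖⁻¹ • x)

/-- The spherical gradient `∇̄ f` of a function on the unit sphere (the Euclidean gradient of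
its `0`-homogeneous extension). -/
def sphGrad {n : ℕ} (f : Euc n → ℝ) (θ : Euc n) : Euc n := gradient (zeroHomExt f) θ

/-- Orthogonal projection onto the tangent space `θ^⊥` of the unit sphere at `θ`. -/
def tanProj {n : ℕ} (θ : Euc n) : Euc n →L[ℝ] Euc n :=
  ContinuousLinearMap.id ℝ (Euc n) - (innerSL ℝ θ).smulRight θ

/-- For a `1`-homogeneous `g : ℝⁿ → ℝ` (e.g. `g = h_K`), the endomorphism of `ℝⁿ` acting as the
Hessian `D²g(θ)` (`= ∇̄²g + g δ̄` on `θ^⊥`) on the tangent space of the sphere at `θ`, and as the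
identity in the radial direction. -/
def hessEnd {n : ℕ} (g : Euc n → ℝ) (θ : Euc n) : Module.End ℝ (Euc n) :=
  (((fderiv ℝ (gradient g) θ).comp (tanProj θ)) + (innerSL ℝ θ).smulRight θ).toLinearMap

/-- `|grad_{g_K} f|²_{g_K}(θ) = h_K(θ) ⟨(D̄²h_K)⁻¹ ∇̄f, ∇̄f⟩`, the squared norm of the gradient
of `f` with respect to the centro-affine metric `g_K = (∇̄²h_K + h_K δ̄)/h_K`. -/
def gradNormSqGK (n : ℕ) (K : Set (Euc n)) (f : Euc n → ℝ) (θ : Euc n) : ℝ :=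
  suppFn K θ * ⟪Ring.inverse (hessEnd (suppFn K) θ) (sphGrad f θ), sphGrad f θ⟫

/-- The first non-zero even eigenvalue `λ_{1,e}(-Δ_K)` of the Hilbert–Brunn–Minkowski operator:
the infimum of the Rayleigh quotients `∫ |grad f|²_{g_K} dV_K / ∫ f² dV_K` over non-zero even
`C²` functions `f` on `S^{n-1}` with `∫ f dV_K = 0`. -/
def lambdaOneEven (n : ℕ) (K : Set (Euc n)) : ℝ :=
  sInf { r : ℝ | ∃ f : Euc n → ℝ, ContDiffOn ℝ 2 (zeroHomExt f) {(0 : Euc n)}ᶜ ∧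
    (∀ x, f (-x) = f x) ∧
    (∫ θ, f θ ∂(coneVolumeMeasure n K)) = 0 ∧
    (∫ θ, (f θ) ^ 2 ∂(coneVolumeMeasure n K)) ≠ 0 ∧
    r = (∫ θ, gradNormSqGK n K f θ ∂(coneVolumeMeasure n K)) /
        (∫ θ, (f θ) ^ 2 ∂(coneVolumeMeasure n K)) }

/-- The Hilbert–Brunn–Minkowski operator
`Δ_K f = ((D̄²h_K)⁻¹)^{ij} [∇̄²_{ij}(f h_K) + (f h_K) δ̄_{ij}] - (n-1) f`. -/
def hbmLaplacian (n : ℕ) (K : Set (Euc n)) (f : Euc n → ℝ) (θ : Euc n) : ℝ :=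
  LinearMap.trace ℝ (Euc n)
    ((Ring.inverse (hessEnd (suppFn K) θ)) ∘ₗ
      ((fderiv ℝ (gradient (fun x => zeroHomExt f x * suppFn K x)) θ).comp (tanProj θ)).toLinearMap)
    - ((n : ℝ) - 1) * f θ


/-- The curvature-pinching condition `a·δ ≤ D²(‖x‖_K²/2) ≤ b·δ` (as quadratic forms)
for all `x` in the unit sphere `S^{n-1}`. -/
def HessPinched (n : ℕ) (K : Set (Euc n)) (a b : ℝ) : Prop :=
  ∀ x ∈ sphere (0 : Euc n) 1, ∀ u : Euc n,
    a * ‖u‖ ^ 2 ≤ hess (halfGaugeSq K) x u u ∧ hess (halfGaugeSq K) x u u ≤ b * ‖u‖ ^ 2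

/-- The projection `π_{∂K}(x) : T_x ℝⁿ → T_x ∂K` onto the tangent space of `∂K` at `x`,
parallel to the radial direction `x`. -/
def radialTanProj {n : ℕ} (K : Set (Euc n)) (x u : Euc n) : Euc n :=
  u - (⟪gaussMap K x, u⟫ / ⟪gaussMap K x, x⟫) • x

open scoped Classical in
/-- The `C^{2,r}`-distance between two convex bodies: the `C²`-norm of the difference of their
support functions on the unit sphere, plus the `r`-Hölder seminorm of its second derivative. -/
def c2aDist (n : ℕ) (r : ℝ) (K L : Set (Euc n)) : ℝ :=
  (⨆ θ : sphere (0 : Euc n) 1, |suppFn K ↑θ - suppFn L ↑θ|) +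
  (⨆ θ : sphere (0 : Euc n) 1, ‖fderiv ℝ (suppFn K) ↑θ - fderiv ℝ (suppFn L) ↑θ‖) +
  (⨆ θ : sphere (0 : Euc n) 1,
    ‖fderiv ℝ (fun z => fderiv ℝ (suppFn K) z) ↑θ
      - fderiv ℝ (fun z => fderiv ℝ (suppFn L) z) ↑θ‖) +
  (⨆ q : sphere (0 : Euc n) 1 × sphere (0 : Euc n) 1,
    if (q.1 : Euc n) = q.2 then 0 else
      ‖(fderiv ℝ (fun z => fderiv ℝ (suppFn K) z) ↑q.1
          - fderiv ℝ (fun z => fderiv ℝ (suppFn L) z) ↑q.1)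
        - (fderiv ℝ (fun z => fderiv ℝ (suppFn K) z) ↑q.2
          - fderiv ℝ (fun z => fderiv ℝ (suppFn L) z) ↑q.2)‖ / ‖(q.1 : Euc n) - ↑q.2‖ ^ r)

/-- The family `F_γ` of origin-symmetric `C^{2,r}` convex bodies with strictly positive curvature
admitting, for some `ℓ ∈ GL(n,ℝ)`, a curvature-pinching `a·δ ≤ D²(‖x‖_{ℓK}²/2) ≤ b·δ` on the
unit sphere with ratio `b/a = γ`. -/
def pinchedFamily (n : ℕ) (r γ : ℝ) : Set (Set (Euc n)) :=
  {K | IsC2HolderBody n r K ∧ IsOriginSymmetric K ∧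
    ∃ ℓ : Euc n ≃ₗ[ℝ] Euc n, ∃ a b : ℝ, 0 < a ∧ a ≤ b ∧ b / a = γ ∧
      HessPinched n (⇑ℓ '' K) a b}


section AuxHess

open InnerProductSpace Filter

variable {n : ℕ} {K : Set (Euc n)}

lemma gauge_pos_aux (hc : IsCompact K) (h0 : (0 : Euc n) ∈ interior K)
    {y : Euc n} (hy : y ≠ 0) : 0 < gauge K y := by
  obtain ⟨R, hsub⟩ := hc.isBounded.subset_closedBall 0
  have hsub' : K ⊆ Metric.closedBall 0 (max R 1) :=
    hsub.trans (Metric.closedBall_subset_closedBall (le_max_left _ _))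
  have hR : (0 : ℝ) < max R 1 := lt_of_lt_of_le one_pos (le_max_right _ _)
  have habs : Absorbent ℝ K := absorbent_nhds_zero (mem_interior_iff_mem_nhds.mp h0)
  have hle := le_gauge_of_subset_closedBall habs hR.le hsub' (x := y)
  have hny : 0 < ‖y‖ := norm_pos_iff.mpr hy
  have : (0 : ℝ) < ‖y‖ / max R 1 := by positivity
  linarith

lemma gauge_contDiffAt_aux (hc : IsCompact K) (h0 : (0 : Euc n) ∈ interior K)
    (hC2 : ContDiffOn ℝ 2 (halfGaugeSq K) {(0 : Euc n)}ᶜ)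
    {y : Euc n} (hy : y ≠ 0) : ContDiffAt ℝ 2 (gauge K) y := by
  have hf : ContDiffAt ℝ 2 (halfGaugeSq K) y :=
    hC2.contDiffAt (IsOpen.mem_nhds isOpen_compl_singleton hy)
  have hgy : 0 < gauge K y := gauge_pos_aux hc h0 hy
  have h2f : (2 : ℝ) * halfGaugeSq K y ≠ 0 := by
    have : (2 : ℝ) * halfGaugeSq K y = gauge K y ^ 2 := by
      rw [halfGaugeSq]; ring
    rw [this]; positivity
  have hsq : ContDiffAt ℝ 2 (fun z => Real.sqrt (2 * halfGaugeSq K z)) y :=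
    (Real.contDiffAt_sqrt h2f).comp y (contDiffAt_const.mul hf)
  refine hsq.congr_of_eventuallyEq (Eventually.of_forall fun z => ?_)
  show gauge K z = Real.sqrt (2 * halfGaugeSq K z)
  have h1 : (2 : ℝ) * halfGaugeSq K z = gauge K z ^ 2 := by rw [halfGaugeSq]; ring
  rw [h1, Real.sqrt_sq (gauge_nonneg _)]

lemma hasFDerivAt_gauge_smul_aux {y : Euc n} {D : Euc n →L[ℝ] ℝ}
    (hD : HasFDerivAt (gauge K) D y) {t : ℝ} (ht : 0 < t) :
    HasFDerivAt (gauge K) D (t • y) := by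
  have h1 : HasFDerivAt (fun z => t * gauge K z) (t • D) y := hD.const_mul t
  have h2 : HasFDerivAt (fun z => gauge K (t • z)) (t • D) y := by
    refine h1.congr_of_eventuallyEq (Eventually.of_forall fun z => ?_)
    show gauge K (t • z) = t * gauge K z
    rw [gauge_smul_of_nonneg ht.le, smul_eq_mul]
  have hmap : HasFDerivAt (fun z : Euc n => t⁻¹ • z)
      ((t⁻¹ : ℝ) • ContinuousLinearMap.id ℝ (Euc n)) (t • y) := by
    exact (hasFDerivAt_id (t • y)).const_smul t⁻¹
  have hfx : (fun z : Euc n => t⁻¹ • z) (t • y) = y := by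
    simp [smul_smul, inv_mul_cancel₀ ht.ne']
  have h3 := (hfx ▸ h2).comp (t • y) hmap
  have hfun : ((fun z => gauge K (t • z)) ∘ fun z : Euc n => t⁻¹ • z) = gauge K := by
    funext z
    simp [Function.comp, smul_smul, mul_inv_cancel₀ ht.ne']
  have hclm : (t • D).comp ((t⁻¹ : ℝ) • ContinuousLinearMap.id ℝ (Euc n)) = D := by
    ext w
    simp [mul_comm]
    rw [← mul_assoc, inv_mul_cancel₀ ht.ne', one_mul]
  rw [hfun, hclm] at h3
  exact h3

end AuxHess

open Topology Filter

set_option maxHeartbeats 1000000 in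
/-- **Lemma 1.1 (formula for the Hessian of the half-squared gauge)**: for `K ∈ 𝒦²₊` and
`x ∈ ∂K`,
`D²(‖x‖_K²/2) = π_{∂K}(x)ᵀ (II_{∂K}(x)/⟨x,ν_K(x)⟩) π_{∂K}(x)
  + (Id - π_{∂K}(x))ᵀ (1/|x|²) (Id - π_{∂K}(x))`,
where `π_{∂K}(x)` is the projection onto `T_x ∂K` parallel to the radial direction `x`. -/
theorem hessian_half_gauge_sq_formula
    (n : ℕ) (K : Set (Euc n)) (hK : IsC2PlusBody n K) :
    ∀ x ∈ frontier K, ∀ u v : Euc n,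
      hess (halfGaugeSq K) x u v =
        secondFF K x (radialTanProj K x u) (radialTanProj K x v) / ⟪x, gaussMap K x⟫
          + ⟪u - radialTanProj K x u, v - radialTanProj K x v⟫ / ‖x‖ ^ 2 := by
  classical
  intro x hx u v
  obtain ⟨⟨hcpt, hconv, h0K⟩, hC2, -⟩ := hK
  have h0nhds : K ∈ 𝓝 (0 : Euc n) := mem_interior_iff_mem_nhds.mp h0K
  have hxint : x ∉ interior K := by
    rw [hcpt.isClosed.frontier_eq] at hx
    exact hx.2
  have hx0 : x ≠ 0 := by rintro rfl; exact hxint h0K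
  have hnx : ‖x‖ ≠ 0 := norm_ne_zero_iff.mpr hx0
  have hgx1 : gauge K x = 1 := (gauge_eq_one_iff_mem_frontier hconv h0nhds).2 hx
  -- smoothness of the gauge away from 0
  have hgC2 : ∀ y : Euc n, y ≠ 0 → ContDiffAt ℝ 2 (gauge K) y :=
    fun y hy => gauge_contDiffAt_aux hcpt h0K hC2 hy
  have hdiff : ∀ y : Euc n, y ≠ 0 → DifferentiableAt ℝ (gauge K) y := fun y hy =>
    (hgC2 y hy).differentiableAt two_ne_zero
  have hFC1 : ContDiffAt ℝ 1 (fderiv ℝ (gauge K)) x :=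
    (hgC2 x hx0).fderiv_right (le_refl 2)
  have hFdiff : DifferentiableAt ℝ (fderiv ℝ (gauge K)) x := hFC1.differentiableAt one_ne_zero
  set F'' := fderiv ℝ (fderiv ℝ (gauge K)) x with hF''def
  have hF'' : HasFDerivAt (fderiv ℝ (gauge K)) F'' x := hFdiff.hasFDerivAt
  -- Euler identity
  have heuler : ∀ y : Euc n, y ≠ 0 → fderiv ℝ (gauge K) y y = gauge K y := by
    intro y hy
    have hD : HasFDerivAt (gauge K) (fderiv ℝ (gauge K) y) y := (hdiff y hy).hasFDerivAt
    have hc : HasDerivAt (fun t : ℝ => t • y) ((1 : ℝ) • y) 1 := (hasDerivAt_id 1).smul_const y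
    have h1 : HasDerivAt (fun t : ℝ => gauge K (t • y))
        (fderiv ℝ (gauge K) y ((1 : ℝ) • y)) 1 := by
      have := HasFDerivAt.comp_hasDerivAt 1
        (show HasFDerivAt (gauge K) (fderiv ℝ (gauge K) y) ((fun t : ℝ => t • y) 1) by
          simpa using hD) hc
      simpa [Function.comp_def] using this
    have h2 : HasDerivAt (fun t : ℝ => t * gauge K y) (gauge K y) 1 :=
      hasDerivAt_mul_const (gauge K y)
    have h3 : (fun t : ℝ => t * gauge K y) =ᶠ[𝓝 (1 : ℝ)] fun t => gauge K (t • y) := by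
      filter_upwards [eventually_gt_nhds zero_lt_one] with t ht
      rw [gauge_smul_of_nonneg ht.le, smul_eq_mul]
    have h4 : HasDerivAt (fun t : ℝ => gauge K (t • y)) (gauge K y) 1 :=
      h2.congr_of_eventuallyEq h3.symm
    have := h1.unique h4
    rwa [one_smul] at this
  -- homogeneity of the derivative
  have hfd_homog : ∀ t : ℝ, 0 < t → fderiv ℝ (gauge K) (t • x) = fderiv ℝ (gauge K) x :=
    fun t ht => (hasFDerivAt_gauge_smul_aux (hdiff x hx0).hasFDerivAt ht).fderiv
  -- the second derivative annihilates the radial direction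
  have hF''x : F'' x = 0 := by
    have hc : HasDerivAt (fun t : ℝ => t • x) ((1 : ℝ) • x) 1 := (hasDerivAt_id 1).smul_const x
    have h1 : HasDerivAt (fun t : ℝ => fderiv ℝ (gauge K) (t • x)) (F'' ((1 : ℝ) • x)) 1 := by
      have := HasFDerivAt.comp_hasDerivAt 1
        (show HasFDerivAt (fderiv ℝ (gauge K)) F'' ((fun t : ℝ => t • x) 1) by
          simpa using hF'') hc
      simpa [Function.comp_def] using this
    have h2 : HasDerivAt (fun _ : ℝ => fderiv ℝ (gauge K) x) (0 : Euc n →L[ℝ] ℝ) 1 :=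
      hasDerivAt_const _ _
    have h3 : (fun t : ℝ => fderiv ℝ (gauge K) (t • x)) =ᶠ[𝓝 (1 : ℝ)]
        fun _ => fderiv ℝ (gauge K) x := by
      filter_upwards [eventually_gt_nhds zero_lt_one] with t ht
      exact hfd_homog t ht
    have h4 : HasDerivAt (fun t : ℝ => fderiv ℝ (gauge K) (t • x)) 0 1 :=
      h2.congr_of_eventuallyEq h3
    have := h1.unique h4
    rwa [one_smul] at this
  -- symmetry of the second derivative
  have hBsymm : ∀ a b : Euc n, F'' a b = F'' b a := by
    have hev : ∀ᶠ y in 𝓝 x, HasFDerivAt (gauge K) (fderiv ℝ (gauge K) y) y := by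
      filter_upwards [eventually_ne_nhds hx0] with y hy
      exact (hdiff y hy).hasFDerivAt
    exact fun a b => second_derivative_symmetric_of_eventually hev hF'' a b
  -- gradient facts
  set G := gradient (gauge K) with hGdef
  have hGinner : ∀ (y : Euc n) (w : Euc n), ⟪G y, w⟫ = fderiv ℝ (gauge K) y w := fun y w =>
    InnerProductSpace.toDual_symm_apply
  have hGx_x : ⟪G x, x⟫ = 1 := by rw [hGinner, heuler x hx0, hgx1]
  have hGx0 : G x ≠ 0 := by
    intro h
    rw [h, inner_zero_left] at hGx_x
    exact one_ne_zero hGx_x.symm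
  have hnGx : ‖G x‖ ≠ 0 := norm_ne_zero_iff.mpr hGx0
  have hnGxi : (‖G x‖⁻¹ : ℝ) ≠ 0 := inv_ne_zero hnGx
  -- derivative of the gradient
  set eL : (Euc n →L[ℝ] ℝ) →L[ℝ] Euc n :=
    ((InnerProductSpace.toDual ℝ (Euc n)).symm.toContinuousLinearEquiv :
      (Euc n →L[ℝ] ℝ) ≃L[ℝ] Euc n).toContinuousLinearMap with heLdef
  have heL : ∀ (D : Euc n →L[ℝ] ℝ) (w : Euc n), ⟪eL D, w⟫ = D w := fun D w =>
    InnerProductSpace.toDual_symm_apply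
  have hHG : HasFDerivAt G (eL.comp F'') x := eL.hasFDerivAt.comp x hF''
  have hGC1 : ContDiffAt ℝ 1 G x := eL.contDiff.contDiffAt.comp x hFC1
  have hinvC1 : ContDiffAt ℝ 1 (fun y => ‖G y‖⁻¹) x := (hGC1.norm ℝ hGx0).inv hnGx
  set Dh := fderiv ℝ (fun y => ‖G y‖⁻¹) x with hDhdef
  have hinv : HasFDerivAt (fun y => ‖G y‖⁻¹) Dh x :=
    (hinvC1.differentiableAt one_ne_zero).hasFDerivAt
  have hNu : HasFDerivAt (gaussMap K) (‖G x‖⁻¹ • (eL.comp F'') + Dh.smulRight (G x)) x :=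
    hinv.smul hHG
  have hNufderiv : fderiv ℝ (gaussMap K) x = ‖G x‖⁻¹ • (eL.comp F'') + Dh.smulRight (G x) :=
    hNu.fderiv
  -- second fundamental form formula
  have hSFF : ∀ a b : Euc n, secondFF K x a b =
      ‖G x‖⁻¹ * F'' a b + Dh a * ⟪G x, b⟫ := by
    intro a b
    rw [secondFF, hNufderiv]
    simp only [ContinuousLinearMap.add_apply, ContinuousLinearMap.smul_apply,
      ContinuousLinearMap.smulRight_apply, ContinuousLinearMap.coe_comp', Function.comp_apply]
    rw [inner_add_left, real_inner_smul_left, real_inner_smul_left, heL]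
  -- the radial projection
  have hnux : ⟪gaussMap K x, x⟫ = ‖G x‖⁻¹ := by
    rw [gaussMap, real_inner_smul_left, ← hGdef, hGx_x, mul_one]
  have hnuw : ∀ w : Euc n, ⟪gaussMap K x, w⟫ = ‖G x‖⁻¹ * fderiv ℝ (gauge K) x w := by
    intro w
    rw [gaussMap, real_inner_smul_left, ← hGdef, hGinner]
  have hproj : ∀ w : Euc n, radialTanProj K x w = w - (fderiv ℝ (gauge K) x w) • x := by
    intro w
    rw [radialTanProj, hnux, hnuw w, mul_comm, mul_div_assoc, div_self hnGxi, mul_one]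
  have hprojsub : ∀ w : Euc n, w - radialTanProj K x w = (fderiv ℝ (gauge K) x w) • x := by
    intro w; rw [hproj w, sub_sub_cancel]
  -- derivative of the half squared gauge
  have hfderiv_f : ∀ y : Euc n, y ≠ 0 →
      HasFDerivAt (halfGaugeSq K) (gauge K y • fderiv ℝ (gauge K) y) y := by
    intro y hy
    have hD := (hdiff y hy).hasFDerivAt
    have h2 := (hD.mul hD).const_mul (1 / 2 : ℝ)
    have heq : halfGaugeSq K = fun z => (1 / 2 : ℝ) * (gauge K z * gauge K z) := by
      funext z; rw [halfGaugeSq, sq]; ring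
    rw [heq]
    refine h2.congr_fderiv ?_
    ext w
    simp [smul_eq_mul]
    ring
  have hev_f : (fun y => fderiv ℝ (halfGaugeSq K) y v) =ᶠ[𝓝 x]
      fun y => gauge K y * fderiv ℝ (gauge K) y v := by
    filter_upwards [eventually_ne_nhds hx0] with y hy
    rw [(hfderiv_f y hy).fderiv]
    simp [smul_eq_mul]
  have hpsi : HasFDerivAt (fun y => fderiv ℝ (gauge K) y v)
      ((ContinuousLinearMap.apply ℝ ℝ v).comp F'') x := by
    have := ((ContinuousLinearMap.apply ℝ ℝ v).hasFDerivAt).comp x hF''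
    simpa [Function.comp_def] using this
  have hmul : HasFDerivAt (fun y => gauge K y * fderiv ℝ (gauge K) y v)
      (gauge K x • ((ContinuousLinearMap.apply ℝ ℝ v).comp F'') +
        (fderiv ℝ (gauge K) x v) • fderiv ℝ (gauge K) x) x :=
    (hdiff x hx0).hasFDerivAt.mul hpsi
  have hLHS : hess (halfGaugeSq K) x u v =
      F'' u v + fderiv ℝ (gauge K) x u * fderiv ℝ (gauge K) x v := by
    rw [hess, hev_f.fderiv_eq, hmul.fderiv]
    simp only [ContinuousLinearMap.add_apply, ContinuousLinearMap.smul_apply,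
      ContinuousLinearMap.coe_comp', Function.comp_apply, ContinuousLinearMap.apply_apply,
      hgx1, one_smul, smul_eq_mul]
    ring
  -- the radial part
  have hx2 : ‖x‖ ^ 2 ≠ 0 := pow_ne_zero 2 hnx
  have hsecond : ⟪u - radialTanProj K x u, v - radialTanProj K x v⟫ / ‖x‖ ^ 2 =
      fderiv ℝ (gauge K) x u * fderiv ℝ (gauge K) x v := by
    rw [hprojsub, hprojsub, real_inner_smul_left, real_inner_smul_right,
      real_inner_self_eq_norm_sq]
    field_simp
  -- the tangential part
  have hGxb : ⟪G x, v - (fderiv ℝ (gauge K) x v) • x⟫ = 0 := by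
    have h1 : ⟪G x, v⟫ = fderiv ℝ (gauge K) x v := hGinner x v
    rw [inner_sub_right, real_inner_smul_right, hGx_x, mul_one, h1, sub_self]
  have hux : F'' u x = 0 := by rw [hBsymm u x, hF''x, ContinuousLinearMap.zero_apply]
  have hF''ab : F'' (u - (fderiv ℝ (gauge K) x u) • x) (v - (fderiv ℝ (gauge K) x v) • x) =
      F'' u v := by
    simp [map_sub, _root_.map_smul, hF''x, ContinuousLinearMap.sub_apply,
      ContinuousLinearMap.smul_apply, ContinuousLinearMap.zero_apply, smul_eq_mul, hux]
  have hfirst : secondFF K x (radialTanProj K x u) (radialTanProj K x v) /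
      ⟪x, gaussMap K x⟫ = F'' u v := by
    rw [show ⟪x, gaussMap K x⟫ = ⟪gaussMap K x, x⟫ from real_inner_comm _ _, hnux, hproj u, hproj v, hSFF, hGxb, mul_zero,
      add_zero, hF''ab, mul_comm, mul_div_assoc, div_self hnGxi, mul_one]
  rw [hLHS, hfirst, hsecond]


end
end

section
/- Let K be a convex body in ℝⁿ with C² boundary and strictly positive curvature, containing the origin in its interior, and suppose α δ ≤ D²(‖x‖²_K/2) ≤ β δ for some 0 < α ≤ β and all x ∈ ∂K. Then (1/√β) B₂ⁿ ⊂ K ⊂ (1/√α) B₂ⁿ, and α δ_{∂K} ≤ II_{∂K}(x)/⟨x, ν_K(x)⟩ ≤ β δ_{∂K} for all x ∈ ∂K, where δ_{∂K} is the induced Euclidean metric on ∂K. -/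
open scoped RealInnerProductSpace ENNReal NNReal Pointwise
open MeasureTheory Metric Set

noncomputable section

/-! Write `g = ‖·‖_K`, so that `halfGaugeSq K = g² / 2` is `2`-homogeneous. Euler's identity,
differentiated along the ray through `x`, gives `D²(g²/2)(x)(x, x) = g(x)² = 1` on `∂K`; testing the
pinching at `u = x` therefore gives `1/√b ≤ |x| ≤ 1/√a` on `∂K`, and the ball inclusions follow by
projecting radially onto `∂K`. For `u` tangent at `x ∈ ∂K` (`Dg(x) u = 0`) the Hessian of `g²/2`
reduces to `g(x) D²g(x)(u, u)`. Since `ν_K = ∇g / |∇g|`, differentiating the normalisation only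
produces a multiple of `∇g ⊥ u`, so `II(u, u) = D²g(x)(u, u) / |∇g(x)|`, while Euler's identity
for `g` gives `⟨x, ν_K(x)⟩ = g(x) / |∇g(x)|`. Hence `II / ⟨x, ν_K⟩` is exactly the tangential
Hessian of `‖·‖_K² / 2`, and the pinching transfers verbatim. -/

open scoped Topology
open Filter

theorem inv_sqrt_le_of_one_le_mul_sq {b s : ℝ} (hs : 0 ≤ s) (h : 1 ≤ b * s ^ 2) : (√b)⁻¹ ≤ s := by
  have hb : 0 < b := pos_of_mul_pos_left (one_pos.trans_le h) (sq_nonneg s)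
  rw [← Real.sqrt_inv, ← Real.sqrt_sq hs]
  exact Real.sqrt_le_sqrt ((inv_le_iff_one_le_mul₀' hb).2 h)

theorem le_inv_sqrt_of_mul_sq_le_one {a s : ℝ} (ha : 0 < a) (hs : 0 ≤ s) (h : a * s ^ 2 ≤ 1) :
    s ≤ (√a)⁻¹ := by
  rw [← Real.sqrt_inv, ← Real.sqrt_sq hs]
  exact Real.sqrt_le_sqrt (by rwa [← mul_one a⁻¹, le_inv_mul_iff₀ ha])

section Homogeneous

variable {E : Type*} [NormedAddCommGroup E] [NormedSpace ℝ E] {f : E → ℝ} {k : ℕ} {x : E}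

theorem fderiv_apply_self_of_homogeneous (hf : ∀ t : ℝ, 0 < t → ∀ y, f (t • y) = t ^ k * f y)
    (hx : DifferentiableAt ℝ f x) : fderiv ℝ f x x = k * f x := by
  have along_ray : HasDerivAt (fun t : ℝ => f (t • x)) (fderiv ℝ f x x) 1 := by
    simpa [Function.comp_def] using
      hx.hasFDerivAt.comp_hasDerivAt_of_eq (1 : ℝ) ((hasDerivAt_id 1).smul_const x) (by simp)
  have power : HasDerivAt (fun t : ℝ => f (t • x)) (k * f x) 1 := by
    have h := (hasDerivAt_pow k (1 : ℝ)).mul_const (f x)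
    simp only [one_pow, mul_one] at h
    refine h.congr_of_eventuallyEq ?_
    filter_upwards [eventually_gt_nhds one_pos] with t ht
    exact hf t ht x
  exact along_ray.unique power

theorem fderiv_fderiv_apply_self_of_homogeneous
    (hf : ∀ t : ℝ, 0 < t → ∀ y, f (t • y) = t ^ k * f y) (hx : ContDiffAt ℝ 2 f x) :
    fderiv ℝ (fun y => fderiv ℝ f y x) x x = k * (k - 1) * f x := by
  set φ := fun y => fderiv ℝ f y x
  have hφ : DifferentiableAt ℝ φ x :=
    ((hx.fderiv_right le_rfl).differentiableAt one_ne_zero).clm_apply (differentiableAt_const x)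
  have along_ray : HasDerivAt (fun t : ℝ => t * φ (t • x)) (φ x + fderiv ℝ φ x x) 1 := by
    have h : HasDerivAt (fun t : ℝ => φ (t • x)) (fderiv ℝ φ x x) 1 := by
      simpa [Function.comp_def] using
        hφ.hasFDerivAt.comp_hasDerivAt_of_eq (1 : ℝ) ((hasDerivAt_id 1).smul_const x) (by simp)
    simpa using (hasDerivAt_id' (1 : ℝ)).fun_mul h
  -- Euler's identity at `t • x` reads `t * φ (t • x) = k * t ^ k * f x`.
  have power : HasDerivAt (fun t : ℝ => t * φ (t • x)) (k * k * f x) 1 := by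
    have h := ((hasDerivAt_pow k (1 : ℝ)).const_mul (k : ℝ)).mul_const (f x)
    simp only [one_pow, mul_one] at h
    refine h.congr_of_eventuallyEq ?_
    have hray : Tendsto (fun t : ℝ => t • x) (𝓝 1) (𝓝 x) :=
      (by fun_prop : Continuous fun t : ℝ => t • x).tendsto' 1 x (one_smul ℝ x)
    filter_upwards [eventually_gt_nhds one_pos,
      hray.eventually (hx.eventually (by simp))] with t ht hdiff
    have euler := fderiv_apply_self_of_homogeneous hf (hdiff.differentiableAt (by norm_num))
    simp only [map_smul, smul_eq_mul, hf t ht] at euler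
    simp only [φ, euler]
    ring
  have euler_x : φ x = k * f x :=
    fderiv_apply_self_of_homogeneous hf (hx.differentiableAt (by norm_num))
  have := along_ray.unique power
  rw [euler_x] at this
  linear_combination this

end Homogeneous

section HalfSquare

variable {E : Type*} [NormedAddCommGroup E] [NormedSpace ℝ E] {g : E → ℝ} {x : E}

theorem ContDiffAt.of_half_sq {n : WithTop ℕ∞} (hnn : ∀ y, 0 ≤ g y) (hx : 0 < g x)
    (h : ContDiffAt ℝ n (fun y => g y ^ 2 / 2) x) : ContDiffAt ℝ n g x := by
  have hsqrt : g = fun y => √(2 * (g y ^ 2 / 2)) := by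
    funext y
    rw [mul_div_cancel₀ _ two_ne_zero, Real.sqrt_sq (hnn y)]
  rw [hsqrt]
  exact (Real.contDiffAt_sqrt (by positivity)).comp x (contDiffAt_const.mul h)

theorem fderiv_fderiv_half_sq_apply (hg : ContDiffAt ℝ 2 g x) (u v : E) :
    fderiv ℝ (fun y => fderiv ℝ (fun z => g z ^ 2 / 2) y u) x v =
      g x * fderiv ℝ (fun y => fderiv ℝ g y u) x v + fderiv ℝ g x v * fderiv ℝ g x u := by
  have hderiv : (fun y => fderiv ℝ (fun z => g z ^ 2 / 2) y u) =ᶠ[𝓝 x]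
      fun y => g y * fderiv ℝ g y u := by
    filter_upwards [hg.eventually (by simp)] with y hy
    have hsq : HasDerivAt (fun s : ℝ => s ^ 2 / 2) (g y) (g y) := by
      simpa using (hasDerivAt_pow 2 (g y)).div_const 2
    have hcomp := hsq.comp_hasFDerivAt y (hy.differentiableAt (by norm_num)).hasFDerivAt
    rw [show (fun z => g z ^ 2 / 2) = (fun s : ℝ => s ^ 2 / 2) ∘ g from rfl, hcomp.fderiv]
    simp
  have hDg : DifferentiableAt ℝ (fun y => fderiv ℝ g y u) x :=
    ((hg.fderiv_right le_rfl).differentiableAt one_ne_zero).clm_apply (differentiableAt_const u)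
  rw [hderiv.fderiv_eq, fderiv_fun_mul (hg.differentiableAt (by norm_num)) hDg]
  simp only [add_apply, smul_apply, smul_eq_mul]
  ring

end HalfSquare

section Gradient

variable {F : Type*} [NormedAddCommGroup F] [InnerProductSpace ℝ F]

theorem inner_fderiv_gradient_apply [CompleteSpace F] {g : F → ℝ} {x : F}
    (hg : DifferentiableAt ℝ (fderiv ℝ g) x) (u v : F) :
    ⟪fderiv ℝ (gradient g) x u, v⟫ = fderiv ℝ (fun y => fderiv ℝ g y v) x u := by
  have hgrad : gradient g = (InnerProductSpace.toDual ℝ F).symm ∘ fderiv ℝ g := rfl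
  rw [hgrad, LinearIsometryEquiv.comp_fderiv, fderiv_clm_apply hg (differentiableAt_const v)]
  simp only [fderiv_const_apply, ContinuousLinearMap.comp_zero, zero_add,
    ContinuousLinearMap.flip_apply]
  exact InnerProductSpace.toDual_symm_apply

theorem inner_fderiv_normalize_of_inner_eq_zero {G : F → F} {x u v : F}
    (hG : DifferentiableAt ℝ G x) (hGx : G x ≠ 0) (hv : ⟪G x, v⟫ = 0) :
    ⟪fderiv ℝ (fun y => ‖G y‖⁻¹ • G y) x u, v⟫ = ‖G x‖⁻¹ * ⟪fderiv ℝ G x u, v⟫ := by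
  have hnorm := (hG.norm ℝ hGx).inv (norm_ne_zero_iff.2 hGx)
  rw [show (fun y => ‖G y‖⁻¹ • G y) = (fun y => ‖G y‖)⁻¹ • G from rfl,
    (hnorm.hasFDerivAt.smul hG.hasFDerivAt).fderiv]
  simp [inner_add_left, real_inner_smul_left, hv]

theorem inner_fderiv_normalize_gradient_div_inner [CompleteSpace F] {g : F → ℝ} {x u : F}
    (hg1 : ∀ t : ℝ, 0 < t → ∀ y, g (t • y) = t * g y) (hg : ContDiffAt ℝ 2 g x) (hgx : g x ≠ 0)
    (hu : ⟪gradient g x, u⟫ = 0) :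
    ⟪fderiv ℝ (fun y => ‖gradient g y‖⁻¹ • gradient g y) x u, u⟫ /
      ⟪x, ‖gradient g x‖⁻¹ • gradient g x⟫ = fderiv ℝ (fun y => fderiv ℝ g y u) x u / g x := by
  have hD2 : DifferentiableAt ℝ (fderiv ℝ g) x :=
    (hg.fderiv_right le_rfl).differentiableAt one_ne_zero
  have euler : ⟪gradient g x, x⟫ = g x := by
    rw [inner_gradient_left, fderiv_apply_self_of_homogeneous (k := 1) (by simpa using hg1)
      (hg.differentiableAt (by norm_num))]
    simp
  have hgrad : gradient g x ≠ 0 := by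
    rintro h
    rw [h, inner_zero_left] at euler
    exact hgx euler.symm
  have hdiff : DifferentiableAt ℝ (gradient g) x :=
    (InnerProductSpace.toDual ℝ F).symm.differentiableAt.comp x hD2
  rw [inner_fderiv_normalize_of_inner_eq_zero hdiff hgrad hu, inner_fderiv_gradient_apply hD2,
    real_inner_smul_right, real_inner_comm, euler]
  field_simp

end Gradient

section Gauge

variable {E : Type*} [NormedAddCommGroup E] [NormedSpace ℝ E] {K : Set E}

theorem inv_gauge_smul_mem_frontier (hc : Convex ℝ K) (h0 : K ∈ 𝓝 0) {y : E}
    (hy : 0 < gauge K y) : (gauge K y)⁻¹ • y ∈ frontier K := by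
  rw [← gauge_eq_one_iff_mem_frontier hc h0, gauge_smul_of_nonneg (inv_nonneg.2 hy.le),
    smul_eq_mul, inv_mul_cancel₀ hy.ne']

theorem norm_inv_gauge_smul {y : E} (hy : 0 < gauge K y) :
    ‖(gauge K y)⁻¹ • y‖ = ‖y‖ / gauge K y := by
  rw [norm_smul, Real.norm_of_nonneg (inv_nonneg.2 hy.le), inv_mul_eq_div]

theorem closedBall_subset_of_forall_mem_frontier_le_norm (hc : Convex ℝ K) (h0 : K ∈ 𝓝 0)
    (hcl : IsClosed K) {r : ℝ} (hr : ∀ x ∈ frontier K, r ≤ ‖x‖) : closedBall 0 r ⊆ K := by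
  intro y hy
  by_contra hyK
  have hy0 : 0 < ‖y‖ := norm_pos_iff.2 fun h => hyK (h ▸ mem_of_mem_nhds h0)
  have hgy : 1 < gauge K y := by
    rw [← not_le, gauge_le_one_iff_mem_closure hc h0, hcl.closure_eq]
    exact hyK
  have hfr := hr _ (inv_gauge_smul_mem_frontier hc h0 (one_pos.trans hgy))
  rw [norm_inv_gauge_smul (one_pos.trans hgy), le_div_iff₀ (one_pos.trans hgy)] at hfr
  rw [mem_closedBall_zero_iff] at hy
  nlinarith

theorem subset_closedBall_of_forall_mem_frontier_norm_le (hc : Convex ℝ K) (h0 : K ∈ 𝓝 0)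
    (hb : Bornology.IsBounded K) {R : ℝ} (hR0 : 0 ≤ R) (hR : ∀ x ∈ frontier K, ‖x‖ ≤ R) :
    K ⊆ closedBall 0 R := by
  intro y hy
  rw [mem_closedBall_zero_iff]
  rcases eq_or_ne y 0 with rfl | hy0
  · simpa using hR0
  have hgy : 0 < gauge K y :=
    (gauge_pos (absorbent_nhds_zero h0) ((NormedSpace.isVonNBounded_iff ℝ).2 hb)).2 hy0
  have hfr := hR _ (inv_gauge_smul_mem_frontier hc h0 hgy)
  rw [norm_inv_gauge_smul hgy, div_le_iff₀ hgy] at hfr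
  nlinarith [gauge_le_one_of_mem hy]

end Gauge

section ConvexBody

variable {n : ℕ} {K : Set (Euc n)}

theorem halfGaugeSq_smul {t : ℝ} (ht : 0 < t) (y : Euc n) :
    halfGaugeSq K (t • y) = t ^ 2 * halfGaugeSq K y := by
  rw [halfGaugeSq, halfGaugeSq, gauge_smul_of_nonneg ht.le, smul_eq_mul]
  ring

theorem contDiffAt_halfGaugeSq_of_mem_frontier (h0 : K ∈ 𝓝 0)
    (hC2 : ContDiffOn ℝ 2 (halfGaugeSq K) {0}ᶜ) {x : Euc n} (hx : x ∈ frontier K) :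
    ContDiffAt ℝ 2 (halfGaugeSq K) x :=
  hC2.contDiffAt <| isOpen_compl_singleton.mem_nhds fun hx0 =>
    hx.2 (hx0 ▸ mem_interior_iff_mem_nhds.2 h0)

theorem hess_halfGaugeSq_self_of_mem_frontier (hc : Convex ℝ K) (h0 : K ∈ 𝓝 0)
    (hC2 : ContDiffOn ℝ 2 (halfGaugeSq K) {0}ᶜ) {x : Euc n} (hx : x ∈ frontier K) :
    hess (halfGaugeSq K) x x x = 1 := by
  rw [hess, fderiv_fderiv_apply_self_of_homogeneous (k := 2) (fun _ ht => halfGaugeSq_smul ht)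
    (contDiffAt_halfGaugeSq_of_mem_frontier h0 hC2 hx), halfGaugeSq,
    (gauge_eq_one_iff_mem_frontier hc h0).2 hx]
  norm_num

theorem secondFF_div_inner_gaussMap_of_mem_frontier (hc : Convex ℝ K) (h0 : K ∈ 𝓝 0)
    (hC2 : ContDiffOn ℝ 2 (halfGaugeSq K) {0}ᶜ) {x u : Euc n} (hx : x ∈ frontier K)
    (hu : ⟪gaussMap K x, u⟫ = 0) :
    secondFF K x u u / ⟪x, gaussMap K x⟫ = hess (halfGaugeSq K) x u u := by
  have hgx : gauge K x = 1 := (gauge_eq_one_iff_mem_frontier hc h0).2 hx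
  have hg : ContDiffAt ℝ 2 (gauge K) x :=
    (contDiffAt_halfGaugeSq_of_mem_frontier h0 hC2 hx).of_half_sq gauge_nonneg (by simp [hgx])
  have hgrad : ⟪gradient (gauge K) x, u⟫ = 0 := by
    rw [gaussMap, real_inner_smul_left] at hu
    rcases mul_eq_zero.1 hu with h | h
    · rw [inv_eq_zero, norm_eq_zero] at h
      rw [h, inner_zero_left]
    · exact h
  have hdu : fderiv ℝ (gauge K) x u = 0 := by rwa [← inner_gradient_left]
  rw [secondFF, show gaussMap K = fun y => ‖gradient (gauge K) y‖⁻¹ • gradient (gauge K) y from rfl,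
    inner_fderiv_normalize_gradient_div_inner (fun t ht y => gauge_smul_of_nonneg ht.le y) hg
      (by simp [hgx]) hgrad, hess,
    show halfGaugeSq K = fun z => gauge K z ^ 2 / 2 from rfl, fderiv_fderiv_half_sq_apply hg,
    hgx, hdu]
  ring

end ConvexBody

theorem pinching_ball_inclusions_and_secondFF_pinching_general
    (n : ℕ) (K : Set (Euc n)) (hK : IsC2PlusBody n K) (a b : ℝ) (ha : 0 < a)
    (hpinch : ∀ x ∈ frontier K, ∀ u : Euc n,
      a * ‖u‖ ^ 2 ≤ hess (halfGaugeSq K) x u u ∧ hess (halfGaugeSq K) x u u ≤ b * ‖u‖ ^ 2) :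
    (closedBall (0 : Euc n) (Real.sqrt b)⁻¹ ⊆ K ∧ K ⊆ closedBall (0 : Euc n) (Real.sqrt a)⁻¹) ∧
    ∀ x ∈ frontier K, ∀ u : Euc n, ⟪gaussMap K x, u⟫ = 0 →
      a * ‖u‖ ^ 2 ≤ secondFF K x u u / ⟪x, gaussMap K x⟫ ∧
      secondFF K x u u / ⟪x, gaussMap K x⟫ ≤ b * ‖u‖ ^ 2 := by
  obtain ⟨⟨hcomp, hc, h0⟩, hC2, -⟩ := hK
  rw [mem_interior_iff_mem_nhds] at h0
  have radial : ∀ x ∈ frontier K, a * ‖x‖ ^ 2 ≤ 1 ∧ 1 ≤ b * ‖x‖ ^ 2 := fun x hx =>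
    hess_halfGaugeSq_self_of_mem_frontier hc h0 hC2 hx ▸ hpinch x hx x
  refine ⟨⟨?_, ?_⟩, fun x hx u hu => ?_⟩
  · exact closedBall_subset_of_forall_mem_frontier_le_norm hc h0 hcomp.isClosed fun x hx =>
      inv_sqrt_le_of_one_le_mul_sq (norm_nonneg x) (radial x hx).2
  · exact subset_closedBall_of_forall_mem_frontier_norm_le hc h0 hcomp.isBounded (by positivity)
      fun x hx => le_inv_sqrt_of_mul_sq_le_one ha (norm_nonneg x) (radial x hx).1
  · rw [secondFF_div_inner_gaussMap_of_mem_frontier hc h0 hC2 hx hu]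
    exact hpinch x hx u

/-- **Lemma 1.1 (consequences of pinching on `∂K`)**: if `K ∈ 𝒦²₊` and
`α δ ≤ D²(‖x‖_K²/2) ≤ β δ` for all `x ∈ ∂K` with `0 < α ≤ β`, then
`(1/√β) B₂ⁿ ⊆ K ⊆ (1/√α) B₂ⁿ` and
`α δ_{∂K} ≤ II_{∂K}(x)/⟨x,ν_K(x)⟩ ≤ β δ_{∂K}` for all `x ∈ ∂K`
(as quadratic forms on the tangent space `T_x ∂K = ν_K(x)^⊥`). -/
theorem pinching_ball_inclusions_and_secondFF_pinching
    (n : ℕ) (K : Set (Euc n)) (hK : IsC2PlusBody n K) (a b : ℝ) (ha : 0 < a) (hab : a ≤ b)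
    (hpinch : ∀ x ∈ frontier K, ∀ u : Euc n,
      a * ‖u‖ ^ 2 ≤ hess (halfGaugeSq K) x u u ∧ hess (halfGaugeSq K) x u u ≤ b * ‖u‖ ^ 2) :
    (closedBall (0 : Euc n) (Real.sqrt b)⁻¹ ⊆ K ∧ K ⊆ closedBall (0 : Euc n) (Real.sqrt a)⁻¹) ∧
    ∀ x ∈ frontier K, ∀ u : Euc n, ⟪gaussMap K x, u⟫ = 0 →
      a * ‖u‖ ^ 2 ≤ secondFF K x u u / ⟪x, gaussMap K x⟫ ∧
      secondFF K x u u / ⟪x, gaussMap K x⟫ ≤ b * ‖u‖ ^ 2 :=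
  pinching_ball_inclusions_and_secondFF_pinching_general n K hK a b ha hpinch

end
end

section
/- Let K be an origin-symmetric C^∞-smooth convex body in ℝⁿ with strictly positive curvature containing the origin in its interior, let X_K = Dh_K : S^{n−1} → ∂K be the inverse Gauss map, and let P_K(x) = D²(‖x‖²_K/2) be the anisotropic Riemannian metric on ℝⁿ \ {0}. Given f ∈ C²(S^{n−1}) and τ ∈ ℝ, push f forward onto ∂K via X_K and let f̂ denote its positively τ-homogeneous extension to ℝⁿ \ {0}. Then the gradient of f̂ with respect to P_K, evaluated along ∂K, equals F := dX_K(grad_{g_K} f) + τ f X_K, where g_K is the centro-affine metric of K. -/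
open scoped RealInnerProductSpace ENNReal NNReal Pointwise
open MeasureTheory Metric Set

noncomputable section

/-!
Let `x` maximise `⟪θ, ·⟫` on `K`. Then `‖x‖_K = 1` and `∇‖·‖_K (x) = θ / h_K(θ)`. Moreover
`h_K (∇(‖·‖²_K/2) (y)) = ‖y‖_K` (Legendre duality), and `D∇(‖·‖²_K/2)` is positive definite by
the curvature assumption, so the inverse function theorem for `∇(‖·‖²_K/2)` gives
`∇h_K(θ) = x`. At this point `P_K = D²‖·‖_K + ∇‖·‖_K ⊗ ∇‖·‖_K`, where `D²‖·‖_K` is symmetric and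
kills `x`, while `f̂ = ‖·‖_K^τ · (f̄ ∘ ∇‖·‖_K)` with `f̄` the `0`-homogeneous extension of `f`,
whose gradient is tangential and `(-1)`-homogeneous. Both sides of the identity then reduce to
`h_K(θ) ⟪D²‖·‖_K(x) ∇̄f(θ), v⟫ + τ f(θ) ⟪θ, v⟫ / h_K(θ)`.
-/

open Filter Topology InnerProductSpace

section Calculus

variable {E F : Type*} [NormedAddCommGroup E] [InnerProductSpace ℝ E]
  [NormedAddCommGroup F] [NormedSpace ℝ F]

theorem HasFDerivAt.apply_self_of_homogeneous {φ : E → F} {φ' : E →L[ℝ] F} {x : E} {k : ℕ}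
    (hφ : HasFDerivAt φ φ' x) (hom : ∀ t : ℝ, 0 < t → φ (t • x) = t ^ k • φ x) :
    φ' x = (k : ℝ) • φ x := by
  have hline : HasDerivAt (fun t : ℝ => φ (x + t • x)) (φ' x) 0 := hφ.hasLineDerivAt x
  have hpow : HasDerivAt (fun t : ℝ => (1 + t) ^ k • φ x) ((k : ℝ) • φ x) 0 := by
    simpa using (((hasDerivAt_id (0 : ℝ)).const_add 1).pow k).smul_const (φ x)
  refine hline.unique (hpow.congr_of_eventuallyEq ?_)
  filter_upwards [eventually_gt_nhds (show (-1 : ℝ) < 0 by norm_num)] with t ht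
  rw [← hom _ (by linarith), add_smul, one_smul]

theorem fderiv_smul_of_homogeneous {φ : E → F} {x : E} {c : ℝ} {k : ℕ}
    (hom : ∀ y, φ (c • y) = c ^ k • φ y) (hx : DifferentiableAt ℝ φ x)
    (hcx : DifferentiableAt ℝ φ (c • x)) :
    c • fderiv ℝ φ (c • x) = c ^ k • fderiv ℝ φ x := by
  have h₁ : HasFDerivAt (fun y => φ (c • y)) ((fderiv ℝ φ (c • x)).comp (c • .id ℝ E)) x :=
    hcx.hasFDerivAt.comp x ((hasFDerivAt_id x).const_smul c)
  have h₂ : HasFDerivAt (fun y => φ (c • y)) (c ^ k • fderiv ℝ φ x) x := by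
    rw [funext hom]
    exact hx.hasFDerivAt.const_smul (c ^ k)
  rw [← h₁.unique h₂]
  ext v
  simp

variable [CompleteSpace E]

theorem ContDiffAt.gradient {φ : E → ℝ} {x : E} {n : WithTop ℕ∞} (hφ : ContDiffAt ℝ (n + 1) φ x) :
    ContDiffAt ℝ n (gradient φ) x :=
  (toDual ℝ E).symm.contDiff.contDiffAt.comp x (hφ.fderiv_right le_rfl)

theorem inner_fderiv_gradient_left (φ : E → ℝ) (x u v : E) :
    ⟪fderiv ℝ (gradient φ) x u, v⟫ = fderiv ℝ (fderiv ℝ φ) x u v := by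
  change ⟪fderiv ℝ ((toDual ℝ E).symm ∘ fderiv ℝ φ) x u, v⟫ = _
  rw [LinearIsometryEquiv.comp_fderiv]
  exact toDual_symm_apply

theorem inner_fderiv_gradient_comm {φ : E → ℝ} {x : E} (hφ : ContDiffAt ℝ 2 φ x) (u v : E) :
    ⟪fderiv ℝ (gradient φ) x u, v⟫ = ⟪fderiv ℝ (gradient φ) x v, u⟫ := by
  simp only [inner_fderiv_gradient_left]
  exact hφ.isSymmSndFDerivAt (by simp) u v

theorem gradient_smul_of_homogeneous {φ : E → ℝ} {x : E} {c : ℝ} {k : ℕ}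
    (hom : ∀ y, φ (c • y) = c ^ k * φ y) (hx : DifferentiableAt ℝ φ x)
    (hcx : DifferentiableAt ℝ φ (c • x)) :
    c • gradient φ (c • x) = c ^ k • gradient φ x := by
  have := fderiv_smul_of_homogeneous (k := k) (fun y => by rw [hom, smul_eq_mul]) hx hcx
  simpa only [gradient, map_smul] using congrArg (toDual ℝ E).symm this

end Calculus

section Gauge

variable {E : Type*} [NormedAddCommGroup E] [InnerProductSpace ℝ E] {K : Set E} {x : E}

theorem gauge_pos_of_isCompact (hKc : IsCompact K) (hK₀ : K ∈ 𝓝 0) (hx : x ≠ 0) :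
    0 < gauge K x :=
  (gauge_pos (absorbent_nhds_zero hK₀) (hKc.isVonNBounded (𝕜 := ℝ))).2 hx

theorem inv_gauge_smul_mem (hKc : IsCompact K) (hK : Convex ℝ K) (hK₀ : K ∈ 𝓝 0) (hx : x ≠ 0) :
    (gauge K x)⁻¹ • x ∈ K := by
  have hgx := gauge_pos_of_isCompact hKc hK₀ hx
  refine hKc.isClosed.closure_subset ((gauge_le_one_iff_mem_closure hK hK₀).1 ?_)
  rw [gauge_smul_of_nonneg (inv_nonneg.2 hgx.le), smul_eq_mul, inv_mul_cancel₀ hgx.ne']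

variable [CompleteSpace E]

theorem inner_gradient_gauge_self (hx : DifferentiableAt ℝ (gauge K) x) :
    ⟪gradient (gauge K) x, x⟫ = gauge K x := by
  rw [inner_gradient_left]
  simpa using hx.hasFDerivAt.apply_self_of_homogeneous (k := 1)
    fun t ht => by rw [gauge_smul_of_nonneg ht.le, pow_one]

theorem inner_gradient_gauge_le (hK : Convex ℝ K) (hK₀ : K ∈ 𝓝 0)
    (hx : DifferentiableAt ℝ (gauge K) x) (z : E) : ⟪gradient (gauge K) x, z⟫ ≤ gauge K z := by
  rw [inner_gradient_left]
  refine le_of_tendsto (hx.hasFDerivAt.hasLineDerivAt z).tendsto_slope_zero_right ?_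
  filter_upwards [self_mem_nhdsWithin] with t (ht : 0 < t)
  have := gauge_add_le hK (absorbent_nhds_zero hK₀) x (t • z)
  rw [gauge_smul_of_nonneg ht.le, smul_eq_mul] at this
  rw [smul_eq_mul, inv_mul_le_iff₀ ht]
  linarith

theorem gradient_gauge_ne_zero (hx : DifferentiableAt ℝ (gauge K) x) (hgx : gauge K x ≠ 0) :
    gradient (gauge K) x ≠ 0 := by
  intro h
  rw [← inner_gradient_gauge_self hx, h, inner_zero_left] at hgx
  exact hgx rfl

theorem gradient_gauge_smul (hg : ContDiffOn ℝ 2 (gauge K) {0}ᶜ) {c : ℝ} (hc : 0 < c)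
    (hx : x ≠ 0) : gradient (gauge K) (c • x) = gradient (gauge K) x := by
  have hd : ∀ y ≠ (0 : E), DifferentiableAt ℝ (gauge K) y := fun y hy =>
    (hg.contDiffAt (compl_singleton_mem_nhds hy)).differentiableAt two_ne_zero
  have := gradient_smul_of_homogeneous (k := 1)
    (fun y => by rw [gauge_smul_of_nonneg hc.le, smul_eq_mul, pow_one]) (hd x hx)
    (hd _ (smul_ne_zero hc.ne' hx))
  rwa [pow_one, smul_right_inj hc.ne'] at this

theorem fderiv_gradient_gauge_apply_self (hg : ContDiffOn ℝ 2 (gauge K) {0}ᶜ) (hx : x ≠ 0) :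
    fderiv ℝ (gradient (gauge K)) x x = 0 := by
  have hd : DifferentiableAt ℝ (gradient (gauge K)) x :=
    ((hg.contDiffAt (compl_singleton_mem_nhds hx)).gradient (n := 1)).differentiableAt
      one_ne_zero
  simpa using hd.hasFDerivAt.apply_self_of_homogeneous (k := 0)
    fun t ht => by rw [gradient_gauge_smul hg ht hx, pow_zero, one_smul]

end Gauge

section SmoothBody

variable {n : ℕ} {K : Set (Euc n)} {f : Euc n → ℝ} {x y z θ : Euc n}

def HasPositiveCurvature (K : Set (Euc n)) : Prop :=
  ∀ x ∈ frontier K, ∀ u : Euc n, ⟪gaussMap K x, u⟫ = 0 → u ≠ 0 → 0 < secondFF K x u u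

theorem contDiffOn_gauge {m : ℕ∞} (hKc : IsCompact K) (hK₀ : K ∈ 𝓝 0)
    (hg : ContDiffOn ℝ m (halfGaugeSq K) {0}ᶜ) : ContDiffOn ℝ m (gauge K) {0}ᶜ := by
  have hpos : ∀ y ∈ ({0}ᶜ : Set (Euc n)), 0 < gauge K y := fun y hy =>
    gauge_pos_of_isCompact hKc hK₀ hy
  refine ((hg.const_smul (2 : ℝ)).sqrt fun y hy => ?_).congr fun y hy => ?_
  · simp only [halfGaugeSq, smul_eq_mul]
    have := hpos y hy
    positivity
  · simp only [halfGaugeSq, smul_eq_mul]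
    rw [mul_div_cancel₀ _ two_ne_zero, Real.sqrt_sq (hpos y hy).le]

theorem gradient_halfGaugeSq (hx : DifferentiableAt ℝ (gauge K) x) :
    gradient (halfGaugeSq K) x = gauge K x • gradient (gauge K) x := by
  have hsq : HasDerivAt (fun t : ℝ => t ^ 2 / 2) (gauge K x) (gauge K x) := by
    simpa using (hasDerivAt_pow 2 (gauge K x)).div_const 2
  have hP : HasFDerivAt (halfGaugeSq K) (gauge K x • fderiv ℝ (gauge K) x) x :=
    hsq.comp_hasFDerivAt x hx.hasFDerivAt
  rw [gradient, hP.fderiv, map_smul, ← gradient]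

theorem fderiv_gradient_halfGaugeSq_apply (hg : ContDiffOn ℝ 2 (gauge K) {0}ᶜ) (hx : x ≠ 0)
    (u : Euc n) :
    fderiv ℝ (gradient (halfGaugeSq K)) x u =
      gauge K x • fderiv ℝ (gradient (gauge K)) x u
        + ⟪gradient (gauge K) x, u⟫ • gradient (gauge K) x := by
  have hgx := hg.contDiffAt (compl_singleton_mem_nhds hx)
  have hprod := (hgx.differentiableAt two_ne_zero).hasFDerivAt.smul
    ((hgx.gradient (n := 1)).differentiableAt one_ne_zero).hasFDerivAt
  rw [(hprod.congr_of_eventuallyEq _).fderiv]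
  · simp [inner_gradient_left]
  · filter_upwards [compl_singleton_mem_nhds hx] with y hy
    exact gradient_halfGaugeSq
      ((hg.contDiffAt (compl_singleton_mem_nhds hy)).differentiableAt two_ne_zero)

theorem hess_eq_inner_fderiv_gradient {φ : Euc n → ℝ} {x : Euc n}
    (hφ : DifferentiableAt ℝ (fderiv ℝ φ) x) (u v : Euc n) :
    hess φ x u v = ⟪fderiv ℝ (gradient φ) x u, v⟫ := by
  rw [inner_fderiv_gradient_left, hess, fderiv_clm_apply hφ (differentiableAt_const v)]
  simp

theorem hess_halfGaugeSq (hg : ContDiffOn ℝ 2 (gauge K) {0}ᶜ) (hx : x ≠ 0) (u v : Euc n) :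
    hess (halfGaugeSq K) x u v =
      gauge K x * ⟪fderiv ℝ (gradient (gauge K)) x u, v⟫
        + ⟪gradient (gauge K) x, u⟫ * ⟪gradient (gauge K) x, v⟫ := by
  have hP : ContDiffAt ℝ 2 (halfGaugeSq K) x :=
    ((hg.contDiffAt (compl_singleton_mem_nhds hx)).pow 2).div_const 2
  rw [hess_eq_inner_fderiv_gradient ((hP.fderiv_right (m := 1) le_rfl).differentiableAt
    one_ne_zero), fderiv_gradient_halfGaugeSq_apply hg hx, inner_add_left, real_inner_smul_left,
    real_inner_smul_left]

theorem secondFF_self_of_inner_eq_zero (hg : ContDiffOn ℝ 2 (gauge K) {0}ᶜ) (hx : x ≠ 0)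
    (hG : gradient (gauge K) x ≠ 0) {u : Euc n} (hu : ⟪gradient (gauge K) x, u⟫ = 0) :
    secondFF K x u u = ‖gradient (gauge K) x‖⁻¹ * ⟪fderiv ℝ (gradient (gauge K)) x u, u⟫ := by
  have hGd := ((hg.contDiffAt (compl_singleton_mem_nhds hx)).gradient (n := 1)).differentiableAt
    one_ne_zero
  have hnorm : DifferentiableAt ℝ (fun y => ‖gradient (gauge K) y‖⁻¹) x :=
    (hGd.norm ℝ hG).inv (norm_ne_zero_iff.2 hG)
  have hν : HasFDerivAt (gaussMap K) _ x := hnorm.hasFDerivAt.smul hGd.hasFDerivAt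
  simp [secondFF, hν.fderiv, inner_add_left, real_inner_smul_left, hu]

theorem inner_fderiv_gradient_gauge_pos (hK : Convex ℝ K) (hK₀ : K ∈ 𝓝 0)
    (hg : ContDiffOn ℝ 2 (gauge K) {0}ᶜ) (hII : HasPositiveCurvature K)
    (hx : gauge K x = 1) {w : Euc n} (hw : w ≠ 0) (hwt : ⟪gradient (gauge K) x, w⟫ = 0) :
    0 < ⟪fderiv ℝ (gradient (gauge K)) x w, w⟫ := by
  have hx0 : x ≠ 0 := by rintro rfl; simp at hx
  have hG := gradient_gauge_ne_zero
    ((hg.contDiffAt (compl_singleton_mem_nhds hx0)).differentiableAt two_ne_zero) (by simp [hx])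
  have hII' := hII x ((gauge_eq_one_iff_mem_frontier hK hK₀).1 hx) w
    (by rw [gaussMap, real_inner_smul_left, hwt, mul_zero]) hw
  rw [secondFF_self_of_inner_eq_zero hg hx0 hG hwt] at hII'
  exact pos_of_mul_pos_right hII' (by positivity)

theorem inner_fderiv_gradient_halfGaugeSq_pos (hK : Convex ℝ K) (hK₀ : K ∈ 𝓝 0)
    (hg : ContDiffOn ℝ 2 (gauge K) {0}ᶜ) (hII : HasPositiveCurvature K)
    (hx : gauge K x = 1) {u : Euc n} (hu : u ≠ 0) :
    0 < ⟪fderiv ℝ (gradient (halfGaugeSq K)) x u, u⟫ := by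
  have hx0 : x ≠ 0 := by rintro rfl; simp at hx
  have hgx := hg.contDiffAt (compl_singleton_mem_nhds hx0)
  set a := ⟪gradient (gauge K) x, u⟫
  -- split `u` into a vector tangent to `∂K` at `x` and a multiple of `x`
  set w := u - a • x
  have hux : u = w + a • x := by simp [w]
  have hwt : ⟪gradient (gauge K) x, w⟫ = 0 := by
    rw [inner_sub_right, real_inner_smul_right,
      inner_gradient_gauge_self (hgx.differentiableAt two_ne_zero), hx, mul_one, sub_self]
  have hDu : ⟪fderiv ℝ (gradient (gauge K)) x u, u⟫ = ⟪fderiv ℝ (gradient (gauge K)) x w, w⟫ := by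
    rw [hux, map_add, map_smul, fderiv_gradient_gauge_apply_self hg hx0, smul_zero, add_zero,
      inner_add_right, real_inner_smul_right, inner_fderiv_gradient_comm hgx w x,
      fderiv_gradient_gauge_apply_self hg hx0, inner_zero_left, mul_zero, add_zero]
  have hquad : ⟪fderiv ℝ (gradient (halfGaugeSq K)) x u, u⟫
      = ⟪fderiv ℝ (gradient (gauge K)) x w, w⟫ + a ^ 2 := by
    rw [fderiv_gradient_halfGaugeSq_apply hg hx0, hx, one_smul, inner_add_left,
      real_inner_smul_left, hDu, sq]
  rw [hquad]
  rcases eq_or_ne w 0 with hw | hw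
  · have ha : a ≠ 0 := by rintro ha; simp [hux, hw, ha] at hu
    rw [hw, map_zero, inner_zero_left, zero_add]
    positivity
  · have := inner_fderiv_gradient_gauge_pos hK hK₀ hg hII hx hw hwt
    positivity

theorem suppFn_smul {c : ℝ} (hc : 0 ≤ c) (y : Euc n) : suppFn K (c • y) = c * suppFn K y := by
  have : (fun z => ⟪c • y, z⟫) '' K = c • (fun z => ⟪y, z⟫) '' K := by
    rw [← Set.image_smul, Set.image_image]
    simp [real_inner_smul_left]
  rw [suppFn, this, Real.sSup_smul_of_nonneg hc, smul_eq_mul, suppFn]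

theorem le_suppFn (hKc : IsCompact K) (hz : z ∈ K) : ⟪y, z⟫ ≤ suppFn K y :=
  le_csSup (hKc.image (continuous_const.inner continuous_id)).bddAbove (mem_image_of_mem _ hz)

theorem suppFn_eq_of_isMaxOn (hz : z ∈ K) (hmax : IsMaxOn (fun z => ⟪y, z⟫) K z) :
    suppFn K y = ⟪y, z⟫ :=
  IsGreatest.csSup_eq ⟨mem_image_of_mem _ hz, by rintro _ ⟨w, hw, rfl⟩; exact hmax hw⟩

theorem suppFn_pos (hKc : IsCompact K) (hK₀ : K ∈ 𝓝 0) (hy : y ≠ 0) : 0 < suppFn K y := by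
  have hlim : Tendsto (fun t : ℝ => t • y) (𝓝 0) (𝓝 0) := by
    simpa using (tendsto_id (x := 𝓝 (0 : ℝ))).smul_const y
  have htK : ∀ᶠ t in 𝓝[>] (0 : ℝ), t • y ∈ K := nhdsWithin_le_nhds (hlim hK₀)
  obtain ⟨t, htK, ht⟩ := (htK.and self_mem_nhdsWithin).exists
  calc 0 < t * ‖y‖ ^ 2 := by have : (0 : ℝ) < ‖y‖ := norm_pos_iff.2 hy; positivity
    _ = ⟪y, t • y⟫ := by rw [real_inner_smul_right, real_inner_self_eq_norm_sq]
    _ ≤ suppFn K y := le_suppFn hKc htK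

theorem inner_le_suppFn_mul_gauge (hKc : IsCompact K) (hK : Convex ℝ K) (hK₀ : K ∈ 𝓝 0)
    (y z : Euc n) : ⟪y, z⟫ ≤ suppFn K y * gauge K z := by
  rcases eq_or_ne z 0 with rfl | hz
  · simp
  have hgz := gauge_pos_of_isCompact hKc hK₀ hz
  have := le_suppFn (y := y) hKc (inv_gauge_smul_mem hKc hK hK₀ hz)
  rw [real_inner_smul_right, inv_mul_le_iff₀ hgz] at this
  linarith

theorem gauge_eq_one_of_isMaxOn (hKc : IsCompact K) (hK : Convex ℝ K) (hK₀ : K ∈ 𝓝 0)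
    (hy : y ≠ 0) (hz : z ∈ K) (hmax : IsMaxOn (fun z => ⟪y, z⟫) K z) : gauge K z = 1 := by
  have hs := suppFn_pos hKc hK₀ hy
  have := inner_le_suppFn_mul_gauge hKc hK hK₀ y z
  rw [← suppFn_eq_of_isMaxOn hz hmax] at this
  exact le_antisymm (gauge_le_one_of_mem hz) (le_of_mul_le_mul_left (by linarith) hs)

theorem gradient_gauge_of_isMaxOn (hKc : IsCompact K) (hK : Convex ℝ K) (hK₀ : K ∈ 𝓝 0)
    (hg : ContDiffOn ℝ 2 (gauge K) {0}ᶜ) (hy : y ≠ 0) (hz : z ∈ K)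
    (hmax : IsMaxOn (fun z => ⟪y, z⟫) K z) : gradient (gauge K) z = (suppFn K y)⁻¹ • y := by
  have hz0 : z ≠ 0 := by
    rintro rfl
    simpa using gauge_eq_one_of_isMaxOn hKc hK hK₀ hy hz hmax
  -- `suppFn K y * gauge K - ⟪y, ·⟫` is nonnegative and vanishes at `z`
  have hmin : IsLocalMin (fun w => suppFn K y * gauge K w - ⟪y, w⟫) z := by
    refine Eventually.of_forall fun w => ?_
    have := inner_le_suppFn_mul_gauge hKc hK hK₀ y w
    simp only [gauge_eq_one_of_isMaxOn hKc hK hK₀ hy hz hmax, mul_one,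
      suppFn_eq_of_isMaxOn hz hmax] at this ⊢
    linarith
  have hd := (((hg.contDiffAt (compl_singleton_mem_nhds hz0)).differentiableAt
    two_ne_zero).hasFDerivAt.const_mul (suppFn K y)).sub (innerSL ℝ y).hasFDerivAt
  have h0 : suppFn K y • fderiv ℝ (gauge K) z = toDual ℝ (Euc n) y :=
    sub_eq_zero.1 (hmin.hasFDerivAt_eq_zero hd)
  rw [eq_inv_smul_iff₀ (suppFn_pos hKc hK₀ hy).ne', gradient, ← map_smul, h0,
    LinearIsometryEquiv.symm_apply_apply]

theorem suppFn_gradient_gauge (hKc : IsCompact K) (hK : Convex ℝ K) (hK₀ : K ∈ 𝓝 0)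
    (hx : DifferentiableAt ℝ (gauge K) x) (hx0 : x ≠ 0) : suppFn K (gradient (gauge K) x) = 1 := by
  have hgx := (gauge_pos_of_isCompact hKc hK₀ hx0).ne'
  rw [suppFn_eq_of_isMaxOn (inv_gauge_smul_mem hKc hK hK₀ hx0), real_inner_smul_right,
    inner_gradient_gauge_self hx, inv_mul_cancel₀ hgx]
  intro w hw
  change ⟪_, w⟫ ≤ ⟪_, _⟫
  rw [real_inner_smul_right, inner_gradient_gauge_self hx, inv_mul_cancel₀ hgx]
  exact (inner_gradient_gauge_le hK hK₀ hx w).trans (gauge_le_one_of_mem hw)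

theorem suppFn_gradient_halfGaugeSq (hKc : IsCompact K) (hK : Convex ℝ K) (hK₀ : K ∈ 𝓝 0)
    (hx : DifferentiableAt ℝ (gauge K) x) (hx0 : x ≠ 0) :
    suppFn K (gradient (halfGaugeSq K) x) = gauge K x := by
  rw [gradient_halfGaugeSq hx, suppFn_smul (gauge_nonneg x),
    suppFn_gradient_gauge hKc hK hK₀ hx hx0, mul_one]

theorem hasFDerivAt_suppFn_gradient_halfGaugeSq (hKc : IsCompact K) (hK : Convex ℝ K)
    (hK₀ : K ∈ 𝓝 0) (hg : ContDiffOn ℝ 2 (gauge K) {0}ᶜ)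
    (hII : HasPositiveCurvature K) (hx : gauge K x = 1) :
    HasFDerivAt (suppFn K) (innerSL ℝ x) (gradient (halfGaugeSq K) x) := by
  have hx0 : x ≠ 0 := by rintro rfl; simp at hx
  have hgx := hg.contDiffAt (compl_singleton_mem_nhds hx0)
  have hP : ContDiffAt ℝ 2 (halfGaugeSq K) x := (hgx.pow 2).div_const 2
  have hpos := fun u (hu : u ≠ 0) => inner_fderiv_gradient_halfGaugeSq_pos hK hK₀ hg hII hx hu
  set A := fderiv ℝ (gradient (halfGaugeSq K)) x
  have hA : Function.Injective A := by
    refine (injective_iff_map_eq_zero A).2 fun u hu => ?_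
    by_contra hu0
    simpa [hu] using hpos u hu0
  set e := (LinearEquiv.ofInjectiveEndo (A : Euc n →ₗ[ℝ] Euc n) hA).toContinuousLinearEquiv
  have hstrict : HasStrictFDerivAt (gradient (halfGaugeSq K)) (e : Euc n →L[ℝ] Euc n) x :=
    (hP.gradient (n := 1)).hasStrictFDerivAt one_ne_zero
  -- near `∇(‖·‖²_K/2)(x)`, the support function is the gauge of the local inverse
  set ψ := hstrict.localInverse
  have hψ : HasFDerivAt ψ (e.symm : Euc n →L[ℝ] Euc n) (gradient (halfGaugeSq K) x) :=
    hstrict.to_localInverse.hasFDerivAt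
  have hψx : ψ (gradient (halfGaugeSq K) x) = x := hstrict.localInverse_apply_image
  have hsupp : suppFn K =ᶠ[𝓝 (gradient (halfGaugeSq K) x)] gauge K ∘ ψ := by
    have hne : ∀ᶠ y in 𝓝 (gradient (halfGaugeSq K) x), ψ y ≠ 0 :=
      hψ.continuousAt.eventually_ne (by rwa [hψx])
    filter_upwards [hstrict.eventually_right_inverse, hne] with y hy hy0
    rw [Function.comp_apply, ← suppFn_gradient_halfGaugeSq hKc hK hK₀ _ hy0, hy]
    exact (hg.contDiffAt (compl_singleton_mem_nhds hy0)).differentiableAt two_ne_zero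
  have hAx : A x = gradient (gauge K) x := by
    rw [fderiv_gradient_halfGaugeSq_apply hg hx0, fderiv_gradient_gauge_apply_self hg hx0,
      inner_gradient_gauge_self (hgx.differentiableAt two_ne_zero), hx, smul_zero, zero_add,
      one_smul]
  have hgψ : HasFDerivAt (gauge K) (fderiv ℝ (gauge K) x) (ψ (gradient (halfGaugeSq K) x)) := by
    rw [hψx]
    exact (hgx.differentiableAt two_ne_zero).hasFDerivAt
  refine ((hgψ.comp _ hψ).congr_of_eventuallyEq hsupp).congr_fderiv
    (ContinuousLinearMap.ext fun v => ?_)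
  have hAe : A (e.symm v) = v := e.apply_symm_apply v
  simp only [ContinuousLinearMap.comp_apply, ContinuousLinearEquiv.coe_coe, innerSL_apply_apply,
    ← inner_gradient_left]
  rw [← hAx, inner_fderiv_gradient_comm hP, hAe, real_inner_comm]

theorem hasFDerivAt_suppFn_of_isMaxOn (hKc : IsCompact K) (hK : Convex ℝ K)
    (hK₀ : K ∈ 𝓝 0) (hg : ContDiffOn ℝ 2 (gauge K) {0}ᶜ)
    (hII : HasPositiveCurvature K) (hθ : θ ≠ 0) (hxK : x ∈ K)
    (hmax : IsMaxOn (fun z => ⟪θ, z⟫) K x) :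
    HasFDerivAt (suppFn K) (innerSL ℝ x) θ := by
  set s := suppFn K θ
  have hs : 0 < s := suppFn_pos hKc hK₀ hθ
  have hx := gauge_eq_one_of_isMaxOn hKc hK hK₀ hθ hxK hmax
  have hx0 : x ≠ 0 := by rintro rfl; simp at hx
  have hPx : gradient (halfGaugeSq K) x = s⁻¹ • θ := by
    rw [gradient_halfGaugeSq ((hg.contDiffAt (compl_singleton_mem_nhds hx0)).differentiableAt
      two_ne_zero), hx, one_smul, gradient_gauge_of_isMaxOn hKc hK hK₀ hg hθ hxK hmax]
  have h := hasFDerivAt_suppFn_gradient_halfGaugeSq hKc hK hK₀ hg hII hx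
  rw [hPx] at h
  -- `h_K` is positively `1`-homogeneous, so its derivative at `θ` is that at `s⁻¹ • θ`
  have hscale : HasFDerivAt (fun y => s * suppFn K (s⁻¹ • y))
      (s • (innerSL ℝ x).comp (s⁻¹ • ContinuousLinearMap.id ℝ (Euc n))) θ :=
    (h.comp θ ((hasFDerivAt_id θ).const_smul s⁻¹)).const_mul s
  refine (hscale.congr_of_eventuallyEq (Eventually.of_forall fun y => ?_)).congr_fderiv ?_
  · simp only [suppFn_smul (inv_nonneg.2 hs.le), mul_inv_cancel_left₀ hs.ne']
  · ext v
    simp [hs.ne']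

theorem gradient_suppFn_of_isMaxOn (hKc : IsCompact K) (hK : Convex ℝ K)
    (hK₀ : K ∈ 𝓝 0) (hg : ContDiffOn ℝ 2 (gauge K) {0}ᶜ)
    (hII : HasPositiveCurvature K) (hθ : θ ≠ 0) (hxK : x ∈ K)
    (hmax : IsMaxOn (fun z => ⟪θ, z⟫) K x) :
    gradient (suppFn K) θ = x :=
  (hasFDerivAt_suppFn_of_isMaxOn hKc hK hK₀ hg hII hθ hxK hmax).hasGradientAt.gradient.trans
    ((toDual ℝ (Euc n)).symm_apply_apply x)

theorem zeroHomExt_smul (f : Euc n → ℝ) {c : ℝ} (hc : 0 < c) (x : Euc n) :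
    zeroHomExt f (c • x) = zeroHomExt f x := by
  rcases eq_or_ne x 0 with rfl | hx
  · simp
  simp only [zeroHomExt, norm_smul, Real.norm_of_nonneg hc.le, smul_smul, mul_inv_rev,
    inv_mul_cancel_right₀ hc.ne']

theorem gradient_zeroHomExt_smul (hf : ContDiffOn ℝ 2 (zeroHomExt f) {0}ᶜ) {c : ℝ} (hc : 0 < c)
    (hx : x ≠ 0) : gradient (zeroHomExt f) (c • x) = c⁻¹ • gradient (zeroHomExt f) x := by
  have hd : ∀ y ≠ (0 : Euc n), DifferentiableAt ℝ (zeroHomExt f) y := fun y hy =>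
    (hf.contDiffAt (compl_singleton_mem_nhds hy)).differentiableAt two_ne_zero
  have := gradient_smul_of_homogeneous (k := 0)
    (fun y => by rw [zeroHomExt_smul f hc, pow_zero, one_mul]) (hd x hx)
    (hd _ (smul_ne_zero hc.ne' hx))
  rw [pow_zero, one_smul] at this
  rw [← this, inv_smul_smul₀ hc.ne']

theorem inner_sphGrad_self (hf : ContDiffOn ℝ 2 (zeroHomExt f) {0}ᶜ) (hθ : θ ≠ 0) :
    ⟪sphGrad f θ, θ⟫ = 0 := by
  rw [sphGrad, inner_gradient_left]
  simpa using ((hf.contDiffAt (compl_singleton_mem_nhds hθ)).differentiableAt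
    two_ne_zero).hasFDerivAt.apply_self_of_homogeneous (k := 0)
    fun t ht => by rw [zeroHomExt_smul f ht, pow_zero, one_smul]

theorem fderiv_gauge_rpow_mul_comp_gaussMap (hg : ContDiffOn ℝ 2 (gauge K) {0}ᶜ)
    (hf : ContDiffOn ℝ 2 (zeroHomExt f) {0}ᶜ) {τ : ℝ} (hx : gauge K x ≠ 0) (v : Euc n) :
    fderiv ℝ (fun x => gauge K x ^ τ * f (gaussMap K x)) x v =
      τ * gauge K x ^ (τ - 1) * ⟪gradient (gauge K) x, v⟫ * f (gaussMap K x)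
        + gauge K x ^ τ *
          ⟪gradient (zeroHomExt f) (gradient (gauge K) x), fderiv ℝ (gradient (gauge K)) x v⟫ := by
  have hx0 : x ≠ 0 := by rintro rfl; simp at hx
  have hgx := hg.contDiffAt (compl_singleton_mem_nhds hx0)
  have hG := gradient_gauge_ne_zero (hgx.differentiableAt two_ne_zero) hx
  have hpow := (Real.hasDerivAt_rpow_const (p := τ) (Or.inl hx)).comp_hasFDerivAt x
    (hgx.differentiableAt two_ne_zero).hasFDerivAt
  have hcomp := ((hf.contDiffAt (compl_singleton_mem_nhds hG)).differentiableAt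
    two_ne_zero).hasFDerivAt.comp x
      ((hgx.gradient (n := 1)).differentiableAt one_ne_zero).hasFDerivAt
  -- `f ∘ ν_K` is definitionally `zeroHomExt f ∘ ∇‖·‖_K`
  have hprod : HasFDerivAt (fun x => gauge K x ^ τ * f (gaussMap K x)) _ x := hpow.mul hcomp
  rw [hprod.fderiv]
  simp only [add_apply, smul_apply, smul_eq_mul,
    ContinuousLinearMap.comp_apply, Function.comp_apply, inner_gradient_left]
  ring

end SmoothBody

theorem anisotropic_gradient_of_homogeneous_extension_general
    (n : ℕ) (K : Set (Euc n)) (hK : IsSmoothBody n K)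
    (f : Euc n → ℝ) (hf : ContDiffOn ℝ 2 (zeroHomExt f) {(0 : Euc n)}ᶜ) (τ : ℝ) :
    ∀ θ ∈ sphere (0 : Euc n) 1, ∀ v : Euc n,
      hess (halfGaugeSq K) (gradient (suppFn K) θ)
          (suppFn K θ • sphGrad f θ + (τ * f θ) • gradient (suppFn K) θ) v
        = fderiv ℝ (fun x => gauge K x ^ τ * f (gaussMap K x))
            (gradient (suppFn K) θ) v := by
  obtain ⟨⟨hKc, hK, hK₀⟩, hP, hII⟩ := hK
  replace hK₀ : K ∈ 𝓝 0 := mem_interior_iff_mem_nhds.1 hK₀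
  have hg : ContDiffOn ℝ 2 (gauge K) {0}ᶜ :=
    (contDiffOn_gauge hKc hK₀ hP).of_le (WithTop.coe_le_coe.2 le_top)
  intro θ hθ v
  have hθ0 : θ ≠ 0 := ne_of_mem_sphere hθ one_ne_zero
  obtain ⟨x, hxK, hmax⟩ := hKc.exists_isMaxOn ⟨0, mem_of_mem_nhds hK₀⟩
    (continuous_const.inner continuous_id : Continuous fun z : Euc n => ⟪θ, z⟫).continuousOn
  rw [gradient_suppFn_of_isMaxOn hKc hK hK₀ hg hII hθ0 hxK hmax]
  have hx := gauge_eq_one_of_isMaxOn hKc hK hK₀ hθ0 hxK hmax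
  have hx0 : x ≠ 0 := by rintro rfl; simp at hx
  have hgx := hg.contDiffAt (compl_singleton_mem_nhds hx0)
  have hs : 0 < suppFn K θ := suppFn_pos hKc hK₀ hθ0
  have hG := gradient_gauge_of_isMaxOn hKc hK hK₀ hg hθ0 hxK hmax
  have hν : gaussMap K x = θ := by
    simp [gaussMap, hG, norm_smul, mem_sphere_zero_iff_norm.1 hθ, abs_of_pos hs, hs.ne']
  have hz : gradient (zeroHomExt f) (gradient (gauge K) x) = suppFn K θ • sphGrad f θ := by
    rw [hG, gradient_zeroHomExt_smul hf (inv_pos.2 hs) hθ0, inv_inv, sphGrad]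
  have hGf : ⟪gradient (gauge K) x, sphGrad f θ⟫ = 0 := by
    rw [hG, real_inner_smul_left, real_inner_comm, inner_sphGrad_self hf hθ0, mul_zero]
  rw [hess_halfGaugeSq hg hx0, fderiv_gauge_rpow_mul_comp_gaussMap hg hf (by simp [hx]), hx, hν,
    hz, real_inner_smul_left, real_inner_comm _ (sphGrad f θ), inner_fderiv_gradient_comm hgx v]
  simp only [map_add, map_smul, fderiv_gradient_gauge_apply_self hg hx0, inner_add_left,
    inner_add_right, real_inner_smul_left, real_inner_smul_right, hGf,
    inner_gradient_gauge_self (hgx.differentiableAt two_ne_zero), hx, Real.one_rpow, smul_zero,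
    inner_zero_left]
  ring

/-- **Remark 3.3 (anisotropic-gradient interpretation of `F`)**: push `f` forward onto `∂K`
via `X_K` and let `f̂(x) = ‖x‖_K^τ f(ν_K(x))` be its positively `τ`-homogeneous extension.
Then the gradient of `f̂` with respect to the anisotropic Riemannian metric
`P_K = D²(‖·‖_K²/2)`, evaluated along `∂K`, equals
`F = dX_K(grad_{g_K} f) + τ f X_K` (in Euclidean terms `h_K ∇̄f + τ f Dh_K`, since
`dX_K(grad_{g_K} f) = h_K ∇̄f`).  The gradient with respect to `P_K` is characterized by
`P_K(grad_{P_K} f̂, v) = df̂(v)` for all `v`. -/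
theorem anisotropic_gradient_of_homogeneous_extension
    (n : ℕ) (K : Set (Euc n)) (hK : IsSmoothBody n K) (hKs : IsOriginSymmetric K)
    (f : Euc n → ℝ) (hf : ContDiffOn ℝ 2 (zeroHomExt f) {(0 : Euc n)}ᶜ) (τ : ℝ) :
    ∀ θ ∈ sphere (0 : Euc n) 1, ∀ v : Euc n,
      hess (halfGaugeSq K) (gradient (suppFn K) θ)
          (suppFn K θ • sphGrad f θ + (τ * f θ) • gradient (suppFn K) θ) v
        = fderiv ℝ (fun x => gauge K x ^ τ * f (gaussMap K x))
            (gradient (suppFn K) θ) v :=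
  anisotropic_gradient_of_homogeneous_extension_general n K hK f hf τ

end
end
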